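/- arXiv:1311.2529 — 3 statements merged into one kernel-verified Lean document; each statement's English description precedes it below -/
import Mathlib

section
/- Let A = [[1,2],[0,1]] and B = [[1,0],[2,1]] in SL(2,ℤ), and let π: SL(2,ℤ) → PSL(2,ℤ) be the quotient map by the center {±I}. Then the group homomorphism from the free group on two generators to PSL(2,ℤ) sending the generators to π(A) and π(B) is injective, and its image equals π(Γ(2)), the image of the principal congruence subgroup of level 2. In particular, Γ(2)/{±I} is a free group of rank 2, freely generated by the images of A and B. -/
/-!
The matrices `A` and `B` play ping-pong on the nonzero vectors of `ℤ²`, so the free group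
embeds into `SL(2,ℤ)` (Sanov). The image lies in the subgroup of matrices with even
off-diagonal and diagonal `≡ 1 mod 4`, which meets the centre `{±I}` only in `I`; hence the
embedding survives the passage to `PSL(2,ℤ)`. Conversely, for `M ∈ Γ(2)` the first column
`(a, c)` has `a` odd and `c` even, so `|a| ≠ |c|` unless `c = 0`, and a power of `A`
(if `|a| > |c|`) or of `B` (if `|a| < |c|`) shortens `|a| + |c|`. This Euclidean algorithm ends
at `±A^k`, so `Γ(2) = ⟨A, B, -I⟩`.
-/

open Matrix MatrixGroups CongruenceSubgroup
open scoped Function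

theorem MonoidHom.injective_comp_of_disjoint {G H K : Type*} [Group G] [Group H] [Group K]
    {f : G →* H} {g : H →* K} (hf : Function.Injective f) (h : Disjoint f.range g.ker) :
    Function.Injective (g.comp f) := by
  rw [injective_iff_map_eq_one] at hf ⊢
  exact fun x hx => hf x (Subgroup.disjoint_def.1 h ⟨x, rfl⟩ hx)

def SubMulAction.nonzero (G M : Type*) [Group G] [AddMonoid M] [DistribMulAction G M] :
    SubMulAction G M where
  carrier := {v | v ≠ 0}
  smul_mem' g _ hv := (smul_ne_zero_iff_ne g).2 hv

theorem Matrix.SpecialLinearGroup.transvection_zpow {ι F : Type*} [DecidableEq ι] [Fintype ι]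
    [CommRing F] {i j : ι} (hij : i ≠ j) (b : F) (n : ℤ) :
    transvection hij b ^ n = transvection hij (n • b) := by
  induction n using Int.induction_on with
  | zero => simp
  | succ k ih => rw [_root_.zpow_add_one, ih, ← transvection_add, add_smul, one_smul]
  | pred k ih => rw [_root_.zpow_sub_one, ih, transvection_inv, ← transvection_add, sub_smul,
      one_smul, sub_eq_add_neg]

theorem Matrix.SpecialLinearGroup.mul_apply_eq_smul_col {n R : Type*} [DecidableEq n]
    [Fintype n] [CommRing R] (T M : SpecialLinearGroup n R) (i j : n) :
    (T * M) i j = (T • fun k => M k j) i := rfl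

theorem Int.exists_natAbs_add_two_mul_lt {a c : ℤ} (hc : c ≠ 0) (h : c.natAbs < a.natAbs) :
    ∃ k : ℤ, (a + 2 * k * c).natAbs < a.natAbs := by
  rcases le_or_gt 0 (a * c) with hac | hac
  · refine ⟨-1, ?_⟩
    rw [mul_nonneg_iff] at hac
    omega
  · refine ⟨1, ?_⟩
    rw [mul_neg_iff] at hac
    omega

namespace Sanov

def A : SL(2, ℤ) := ⟨!![1, 2; 0, 1], by norm_num [Matrix.det_fin_two_of]⟩

def B : SL(2, ℤ) := ⟨!![1, 0; 2, 1], by norm_num [Matrix.det_fin_two_of]⟩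

def gen (b : Bool) : SL(2, ℤ) := if b then B else A

lemma A_eq_transvection :
    A = Matrix.SpecialLinearGroup.transvection (zero_ne_one : (0 : Fin 2) ≠ 1) 2 := by
  ext i j
  fin_cases i <;> fin_cases j <;> simp [A, Matrix.SpecialLinearGroup.transvection_coe]

lemma B_eq_transvection :
    B = Matrix.SpecialLinearGroup.transvection (one_ne_zero : (1 : Fin 2) ≠ 0) 2 := by
  ext i j
  fin_cases i <;> fin_cases j <;> simp [B, Matrix.SpecialLinearGroup.transvection_coe]

lemma coe_A_zpow (n : ℤ) :
    ((A ^ n : SL(2, ℤ)) : Matrix (Fin 2) (Fin 2) ℤ) = !![1, 2 * n; 0, 1] := by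
  rw [A_eq_transvection, Matrix.SpecialLinearGroup.transvection_zpow,
    Matrix.SpecialLinearGroup.transvection_coe]
  ext i j
  fin_cases i <;> fin_cases j <;> simp [mul_comm]

lemma A_zpow_smul (n : ℤ) (v : Fin 2 → ℤ) : A ^ n • v = ![v 0 + 2 * n * v 1, v 1] := by
  rw [Matrix.SpecialLinearGroup.smul_def, coe_A_zpow]
  ext i
  fin_cases i <;> simp [mulVec, dotProduct]

lemma B_zpow_smul (n : ℤ) (v : Fin 2 → ℤ) : B ^ n • v = ![v 0, v 1 + 2 * n * v 0] := by
  rw [B_eq_transvection, Matrix.SpecialLinearGroup.transvection_zpow,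
    Matrix.SpecialLinearGroup.smul_def, Matrix.SpecialLinearGroup.transvection_coe]
  ext i
  fin_cases i <;> simp [mulVec, dotProduct]
  ring

lemma A_smul (v : Fin 2 → ℤ) : A • v = ![v 0 + 2 * v 1, v 1] := by
  simpa using A_zpow_smul 1 v

lemma A_inv_smul (v : Fin 2 → ℤ) : A⁻¹ • v = ![v 0 - 2 * v 1, v 1] := by
  simpa [sub_eq_add_neg] using A_zpow_smul (-1) v

lemma B_smul (v : Fin 2 → ℤ) : B • v = ![v 0, v 1 + 2 * v 0] := by
  simpa using B_zpow_smul 1 v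

lemma B_inv_smul (v : Fin 2 → ℤ) : B⁻¹ • v = ![v 0, v 1 - 2 * v 0] := by
  simpa [sub_eq_add_neg] using B_zpow_smul (-1) v

lemma mem_Gamma_two_iff {M : SL(2, ℤ)} :
    M ∈ Γ(2) ↔ Odd (M 0 0) ∧ Even (M 0 1) ∧ Even (M 1 0) ∧ Odd (M 1 1) := by
  simp [ZMod.intCast_eq_one_iff_odd, ZMod.intCast_eq_zero_iff_even]

lemma A_mem_Gamma_two : A ∈ Γ(2) := mem_Gamma_two_iff.2 (by simp [A])

lemma B_mem_Gamma_two : B ∈ Γ(2) := mem_Gamma_two_iff.2 (by simp [B])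

/- On the slope `x = v 0 / v 1 ∈ ℚ ∪ {∞}`, `A` and `B` act by `x ↦ x + 2` and
`x ↦ x / (2x + 1)`. The forward sets are `[1, ∞]` for `A` and `[0, 1)` for `B`, the backward
sets `(-∞, -1)` for `A` and `[-1, 0)` for `B`. -/
def forwardSet (b : Bool) : Set (Fin 2 → ℤ) :=
  cond b {v | |v 0| < |v 1| ∧ 0 ≤ v 0 * v 1} {v | |v 1| ≤ |v 0| ∧ 0 ≤ v 0 * v 1}

def backwardSet (b : Bool) : Set (Fin 2 → ℤ) :=
  cond b {v | v 0 * v 1 < 0 ∧ |v 0| ≤ |v 1|} {v | v 0 * v 1 < 0 ∧ |v 1| < |v 0|}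

lemma pairwise_disjoint_forwardSet : Pairwise (Disjoint on forwardSet) :=
  pairwise_disjoint_on_bool.2 <| Set.disjoint_left.2 fun v h h' => by
    simp only [Set.mem_ofPred_eq, abs_eq_max_neg] at h h'
    omega

lemma pairwise_disjoint_backwardSet : Pairwise (Disjoint on backwardSet) :=
  pairwise_disjoint_on_bool.2 <| Set.disjoint_left.2 fun v h h' => by
    simp only [Set.mem_ofPred_eq, abs_eq_max_neg] at h h'
    omega

lemma disjoint_forwardSet_backwardSet (b b' : Bool) :
    Disjoint (forwardSet b) (backwardSet b') :=
  Set.disjoint_left.2 fun v h h' => by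
    cases b <;> cases b' <;>
      simp only [forwardSet, backwardSet, cond, Set.mem_ofPred_eq] at h h' <;> omega

lemma gen_smul_mem_forwardSet (b : Bool) {v : Fin 2 → ℤ} (hv : v ≠ 0)
    (h : v ∉ backwardSet b) : gen b • v ∈ forwardSet b := by
  have hv' : v 0 ≠ 0 ∨ v 1 ≠ 0 := by simpa [Function.ne_iff, Fin.exists_fin_two] using hv
  cases b <;>
  · simp only [gen, backwardSet, forwardSet, cond, A_smul, B_smul, Bool.false_eq_true, if_true,
      if_false, Set.mem_ofPred_eq, Matrix.cons_val_zero, Matrix.cons_val_one, mul_neg_iff,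
      mul_nonneg_iff, abs_eq_max_neg] at h ⊢
    omega

lemma gen_inv_smul_mem_backwardSet (b : Bool) {v : Fin 2 → ℤ} (hv : v ≠ 0)
    (h : v ∉ forwardSet b) : (gen b)⁻¹ • v ∈ backwardSet b := by
  have hv' : v 0 ≠ 0 ∨ v 1 ≠ 0 := by simpa [Function.ne_iff, Fin.exists_fin_two] using hv
  cases b <;>
  · simp only [gen, backwardSet, forwardSet, cond, A_inv_smul, B_inv_smul, Bool.false_eq_true,
      if_true, if_false, Set.mem_ofPred_eq, Matrix.cons_val_zero, Matrix.cons_val_one,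
      mul_neg_iff, mul_nonneg_iff, abs_eq_max_neg] at h ⊢
    omega

theorem injective_lift_gen : Function.Injective (FreeGroup.lift gen) := by
  refine FreeGroup.injective_lift_of_ping_pong
    (α := SubMulAction.nonzero SL(2, ℤ) (Fin 2 → ℤ)) gen
    (fun b => Subtype.val ⁻¹' forwardSet b) (fun b => Subtype.val ⁻¹' backwardSet b) ?_
    (fun _ _ hij => (pairwise_disjoint_forwardSet hij).preimage _)
    (fun _ _ hij => (pairwise_disjoint_backwardSet hij).preimage _)
    (fun b b' => (disjoint_forwardSet_backwardSet b b').preimage _) ?_ ?_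
  · rintro (_ | _)
    · exact ⟨⟨![1, 0], fun h => by simpa using congrFun h 0⟩, by simp [forwardSet]⟩
    · exact ⟨⟨![0, 1], fun h => by simpa using congrFun h 1⟩, by simp [forwardSet]⟩
  · rintro b _ ⟨v, hv, rfl⟩
    exact gen_smul_mem_forwardSet b v.2 hv
  · rintro b _ ⟨v, hv, rfl⟩
    exact gen_inv_smul_mem_backwardSet b v.2 hv

def gammaTwoDiagOneModFour : Subgroup SL(2, ℤ) where
  carrier := {M | M 0 0 ≡ 1 [ZMOD 4] ∧ M 1 1 ≡ 1 [ZMOD 4] ∧ 2 ∣ M 0 1 ∧ 2 ∣ M 1 0}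
  one_mem' := by simp [Int.ModEq]
  mul_mem' := by
    rintro M N ⟨ha, hd, hb, hc⟩ ⟨ha', hd', hb', hc'⟩
    have even_mul_even {x y : ℤ} (hx : 2 ∣ x) (hy : 2 ∣ y) : x * y ≡ 0 [ZMOD 4] :=
      Int.modEq_zero_iff_dvd.2 (by simpa using mul_dvd_mul hx hy)
    simp only [Set.mem_ofPred_eq, Matrix.SpecialLinearGroup.coe_mul, Matrix.mul_apply,
      Fin.sum_univ_two]
    refine ⟨?_, ?_, ?_, ?_⟩
    · simpa using (ha.mul ha').add (even_mul_even hb hc')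
    · simpa [add_comm] using (even_mul_even hc hb').add (hd.mul hd')
    · exact dvd_add (dvd_mul_of_dvd_right hb' _) (dvd_mul_of_dvd_left hb _)
    · exact dvd_add (dvd_mul_of_dvd_left hc _) (dvd_mul_of_dvd_right hc' _)
  inv_mem' := by
    rintro M ⟨ha, hd, hb, hc⟩
    simp only [Matrix.SpecialLinearGroup.SL2_inv_expl]
    exact ⟨hd, ha, (dvd_neg).2 hb, (dvd_neg).2 hc⟩

lemma range_lift_gen_le : (FreeGroup.lift gen).range ≤ gammaTwoDiagOneModFour :=
  FreeGroup.range_lift_le <| by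
    rintro _ ⟨_ | _, rfl⟩ <;> exact ⟨rfl, rfl, by decide, by decide⟩

lemma disjoint_gammaTwoDiagOneModFour_center :
    Disjoint gammaTwoDiagOneModFour (Subgroup.center SL(2, ℤ)) := by
  rw [Subgroup.disjoint_def]
  rintro M ⟨ha, -⟩ hM
  obtain ⟨r, hr, hrM⟩ := Matrix.SpecialLinearGroup.mem_center_iff.1 hM
  rw [Fintype.card_fin, sq_eq_one_iff] at hr
  have hr1 : r = 1 := by
    have h00 : M 0 0 = r := by rw [← hrM]; rfl
    rw [h00] at ha
    rcases hr with rfl | rfl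
    · rfl
    · exact absurd ha (by decide)
  ext : 1
  rw [← hrM, hr1, map_one, Matrix.SpecialLinearGroup.coe_one]

theorem injective_mk_comp_lift_gen :
    Function.Injective
      ((QuotientGroup.mk' (Subgroup.center SL(2, ℤ))).comp (FreeGroup.lift gen)) := by
  refine MonoidHom.injective_comp_of_disjoint injective_lift_gen ?_
  rw [QuotientGroup.ker_mk']
  exact disjoint_gammaTwoDiagOneModFour_center.mono_left range_lift_gen_le

lemma eq_A_zpow_or_neg_of_apply_one_zero_eq_zero {M : SL(2, ℤ)} (hM : M ∈ Γ(2))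
    (hc : M 1 0 = 0) : M = A ^ (M 0 1 / 2) ∨ M = -A ^ (-(M 0 1 / 2)) := by
  have hb := Int.even_iff.1 (mem_Gamma_two_iff.1 hM).2.1
  have hdet : M 0 0 * M 1 1 = 1 := by
    have := M.det_coe
    rwa [Matrix.det_fin_two, hc, mul_zero, sub_zero] at this
  rcases Int.eq_one_or_neg_one_of_mul_eq_one' hdet with ⟨ha, hd⟩ | ⟨ha, hd⟩
  · left
    ext i j
    fin_cases i <;> fin_cases j <;> simp [coe_A_zpow] <;> omega
  · right
    ext i j
    fin_cases i <;> fin_cases j <;> simp [coe_A_zpow] <;> omega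

theorem Gamma_two_le_closure : Γ(2) ≤ Subgroup.closure {A, B, -1} := by
  set S := Subgroup.closure ({A, B, -1} : Set SL(2, ℤ))
  have hA : A ∈ S := Subgroup.subset_closure (by simp)
  have hB : B ∈ S := Subgroup.subset_closure (by simp)
  have hneg : -1 ∈ S := Subgroup.subset_closure (by simp)
  intro M hM
  induction hn : (M 0 0).natAbs + (M 1 0).natAbs using Nat.strong_induction_on
    generalizing M with
  | _ n ih =>
  obtain ⟨ha, -, hc, -⟩ := mem_Gamma_two_iff.1 hM
  rw [Int.odd_iff] at ha
  rw [Int.even_iff] at hc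
  have of_mul {T : SL(2, ℤ)} (hTS : T ∈ S) (hT : T ∈ Γ(2))
      (hlt : ((T * M) 0 0).natAbs + ((T * M) 1 0).natAbs < n) : M ∈ S := by
    simpa using S.mul_mem (S.inv_mem hTS) (ih _ hlt (mul_mem hT hM) rfl)
  rcases lt_trichotomy (M 1 0).natAbs (M 0 0).natAbs with h | h | h
  · by_cases hc0 : M 1 0 = 0
    · rcases eq_A_zpow_or_neg_of_apply_one_zero_eq_zero hM hc0 with hMA | hMA <;> rw [hMA]
      · exact zpow_mem hA _
      · rw [← neg_one_mul]
        exact mul_mem hneg (zpow_mem hA _)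
    · obtain ⟨k, hk⟩ := Int.exists_natAbs_add_two_mul_lt hc0 h
      refine of_mul (zpow_mem hA k) (zpow_mem A_mem_Gamma_two k) ?_
      simp only [Matrix.SpecialLinearGroup.mul_apply_eq_smul_col, A_zpow_smul,
        Matrix.cons_val_zero, Matrix.cons_val_one]
      omega
  · omega
  · obtain ⟨k, hk⟩ := Int.exists_natAbs_add_two_mul_lt (by omega : M 0 0 ≠ 0) h
    refine of_mul (zpow_mem hB k) (zpow_mem B_mem_Gamma_two k) ?_
    simp only [Matrix.SpecialLinearGroup.mul_apply_eq_smul_col, B_zpow_smul,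
      Matrix.cons_val_zero, Matrix.cons_val_one]
    omega

theorem range_mk_comp_lift_gen :
    ((QuotientGroup.mk' (Subgroup.center SL(2, ℤ))).comp (FreeGroup.lift gen)).range =
      Γ(2).map (QuotientGroup.mk' (Subgroup.center SL(2, ℤ))) := by
  set π := QuotientGroup.mk' (Subgroup.center SL(2, ℤ))
  refine le_antisymm ?_ ?_
  · rw [MonoidHom.range_comp]
    exact Subgroup.map_mono <| FreeGroup.range_lift_le <| by
      rintro _ ⟨_ | _, rfl⟩
      exacts [A_mem_Gamma_two, B_mem_Gamma_two]
  · calc Γ(2).map π ≤ (Subgroup.closure {A, B, -1}).map π :=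
          Subgroup.map_mono Gamma_two_le_closure
      _ = Subgroup.closure (π '' {A, B, -1}) := MonoidHom.map_closure _ _
      _ ≤ _ := by
        rw [Subgroup.closure_le]
        rintro _ ⟨X, hX, rfl⟩
        rcases hX with rfl | rfl | rfl
        · exact ⟨FreeGroup.of false, by simp [gen]⟩
        · exact ⟨FreeGroup.of true, by simp [gen]⟩
        · have hπ : π (-1) = 1 := by
            rw [← MonoidHom.mem_ker, QuotientGroup.ker_mk']
            exact Subgroup.mem_center_iff.2 fun g => by simp
          exact hπ ▸ one_mem _

end Sanov

/-- The images in `PSL(2,ℤ) = SL(2,ℤ)/{±I}` of `A = [[1,2],[0,1]]` and `B = [[1,0],[2,1]]`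
freely generate the image of `Γ(2)`: the homomorphism from the free group on two generators
sending the generators to `π(A)` and `π(B)` is injective with image `π(Γ(2))`. -/
theorem stmt6 :
    let π := QuotientGroup.mk' (Subgroup.center (Matrix.SpecialLinearGroup (Fin 2) ℤ))
    let A : Matrix.SpecialLinearGroup (Fin 2) ℤ :=
      ⟨!![1, 2; 0, 1], by norm_num [Matrix.det_fin_two_of]⟩
    let B : Matrix.SpecialLinearGroup (Fin 2) ℤ :=
      ⟨!![1, 0; 2, 1], by norm_num [Matrix.det_fin_two_of]⟩
    let φ := FreeGroup.lift (fun b : Bool => if b then π B else π A)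
    Function.Injective φ ∧
      MonoidHom.range φ = Subgroup.map π (CongruenceSubgroup.Gamma 2) := by
  intro π A B φ
  have hφ : φ = π.comp (FreeGroup.lift Sanov.gen) :=
    FreeGroup.ext_hom _ _ fun b => by cases b <;> rfl
  rw [hφ]
  exact ⟨Sanov.injective_mk_comp_lift_gen, Sanov.range_mk_comp_lift_gen⟩
end

section
/- Let K be a field of characteristic 0 containing an element r with r² = 2 (e.g., K = ℚ(√2) with r = √2). Define the polynomial f(t) = (2r·t³ − 2(2r+1)·t² + (−4+7r)·t + 1)² · (14t² + 6(r+4)·t − 8r + 31) in K[t]. Then f(t) − 432(4r − 5) = (2t² − 2r + 1)³ · (14t² − 8(r+4)·t − 14r + 63). In particular f is a polynomial of degree 8 whose values 0 and 432(4r−5) are attained with root multiplicities (2,2,2,1,1) and (3,3,1,1) respectively; it is a Belyi map (after rescaling) with passport (0, PGL₂(F₇), (2³1², 3²1², 8¹)). -/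
open Polynomial

noncomputable def belyiPGL27 {R : Type*} [CommRing R] (r : R) : R[X] :=
  (C (2 * r) * X ^ 3 - C (2 * (2 * r + 1)) * X ^ 2 + C (-4 + 7 * r) * X + 1) ^ 2 *
    (C 14 * X ^ 2 + C (6 * (r + 4)) * X + C (-8 * r + 31))

theorem belyiPGL27_sub_C {R : Type*} [CommRing R] {r : R} (hr : r ^ 2 = 2) :
    belyiPGL27 r - C (432 * (4 * r - 5)) =
      (C 2 * X ^ 2 + C (-2 * r + 1)) ^ 3 *
        (C 14 * X ^ 2 - C (8 * (r + 4)) * X + C (-14 * r + 63)) := by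
  have hC : (C r : R[X]) ^ 2 = 2 := by rw [← C_pow, hr, map_ofNat]
  simp only [belyiPGL27, map_mul, map_add, map_sub, map_neg, map_ofNat]
  grind

theorem natDegree_belyiPGL27 {K : Type*} [Field K] [CharZero K] {r : K} (hr : r ≠ 0) :
    (belyiPGL27 r).natDegree = 8 := by
  unfold belyiPGL27
  compute_degree!

/-- Let `K` be a field of characteristic 0 with `r² = 2`, and let
`f(t) = (2r·t³ − 2(2r+1)·t² + (−4+7r)·t + 1)² · (14t² + 6(r+4)·t − 8r + 31)`.
Then `f(t) − 432(4r − 5) = (2t² − 2r + 1)³ · (14t² − 8(r+4)·t − 14r + 63)`, and `f` has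
degree 8. -/
theorem stmt12 {K : Type*} [Field K] [CharZero K] (r : K) (hr : r ^ 2 = 2) :
    let f : K[X] :=
      (C (2 * r) * X ^ 3 - C (2 * (2 * r + 1)) * X ^ 2 + C (-4 + 7 * r) * X + 1) ^ 2 *
        (C 14 * X ^ 2 + C (6 * (r + 4)) * X + C (-8 * r + 31))
    f - C (432 * (4 * r - 5)) =
        (C 2 * X ^ 2 + C (-2 * r + 1)) ^ 3 *
          (C 14 * X ^ 2 - C (8 * (r + 4)) * X + C (-14 * r + 63)) ∧
      f.natDegree = 8 := by
  have hr0 : r ≠ 0 := by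
    rintro rfl
    norm_num at hr
  exact ⟨belyiPGL27_sub_C hr, natDegree_belyiPGL27 hr0⟩
end

section
/- Let K be a field of characteristic different from 2 and let λ ∈ K. In K[x], define s(x) = (−4x³ + 3x + 1)/2 and q(x) = (−4x⁵ + 7x³ − (2λ−1)x² − 3x + (2λ−1))/2. Then the polynomial identity ((−4x² + 1)/2)² · q(x) = s(x)·(s(x) − 1)·(s(x) − λ) holds in K[x]. Consequently, the map (x, y) ↦ (s(x), y·(−4x² + 1)/2) sends points of the hyperelliptic curve y² = q(x) to points of the Legendre elliptic curve y² = x(x−1)(x−λ). -/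
/-!
With `T₃ = 4x³ - 3x` the Chebyshev polynomial, `s = (1 - T₃)/2`, and the factorizations
`1 - T₃ = -(x - 1)(2x + 1)²`, `-1 - T₃ = -(x + 1)(2x - 1)²` give
`s (s - 1) = ((1 - 4x²)/2)² (x² - 1)`. On the other hand `q = (x² - 1)(s - λ)`, so both sides
of the identity equal `((1 - 4x²)/2)² (x² - 1)(s - λ)`.
-/

open Polynomial

section HalfCommRing

variable {R : Type*} [CommRing R] {t : R} (ht : 2 * t = 1) (x l : R)
include ht

theorem cubic_mul_cubic_sub_one_of_two_mul_eq_one :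
    t * (-4 * x ^ 3 + 3 * x + 1) * (t * (-4 * x ^ 3 + 3 * x + 1) - 1) =
      (t * (-4 * x ^ 2 + 1)) ^ 2 * (x ^ 2 - 1) := by
  linear_combination t * (-4 * x ^ 3 + 3 * x + 1) * ht

theorem quintic_eq_mul_cubic_sub_of_two_mul_eq_one :
    t * (-4 * x ^ 5 + 7 * x ^ 3 - (2 * l - 1) * x ^ 2 - 3 * x + (2 * l - 1)) =
      (x ^ 2 - 1) * (t * (-4 * x ^ 3 + 3 * x + 1) - l) := by
  linear_combination (-(x ^ 2 - 1) * l) * ht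

end HalfCommRing

/-- For a field `K` with `char K ≠ 2` and `λ ∈ K`, with `s(x) = (−4x³ + 3x + 1)/2` and
`q(x) = (−4x⁵ + 7x³ − (2λ−1)x² − 3x + (2λ−1))/2`, one has the polynomial identity
`((−4x² + 1)/2)² · q(x) = s(x)(s(x) − 1)(s(x) − λ)` in `K[x]`; hence
`(x, y) ↦ (s(x), y·(−4x² + 1)/2)` maps the hyperelliptic curve `y² = q(x)` to the Legendre
curve `y² = x(x−1)(x−λ)`. -/
theorem stmt14 {K : Type*} [Field K] (h2 : (2 : K) ≠ 0) (l : K) :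
    let s : K[X] := C (2⁻¹ : K) * (-4 * X ^ 3 + 3 * X + 1)
    let q : K[X] :=
      C (2⁻¹ : K) * (-4 * X ^ 5 + 7 * X ^ 3 - C (2 * l - 1) * X ^ 2 - 3 * X + C (2 * l - 1))
    (C (2⁻¹ : K) * (-4 * X ^ 2 + 1)) ^ 2 * q = s * (s - 1) * (s - C l) := by
  intro s q
  have ht : (2 : K[X]) * C 2⁻¹ = 1 := by
    rw [← C_ofNat, ← C_mul, mul_inv_cancel₀ h2, C_1]
  have hq : q = (X ^ 2 - 1) * (s - C l) := by
    simp only [q, s, C_sub, C_mul, C_ofNat, C_1]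
    exact quintic_eq_mul_cubic_sub_of_two_mul_eq_one ht X (C l)
  rw [hq, cubic_mul_cubic_sub_one_of_two_mul_eq_one ht X]
  ring
end
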